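/- arXiv:1907.11470 — 2 statements merged into one kernel-verified Lean document; each statement's English description precedes it below -/
import Mathlib

section
/- Let R(λ) = ∫₀^∞ e^{−λt} C_{γ,δ}(t) dt, existing for λ ≥ λ₀, where C_{γ,δ}(t) is a general fractional cosine operator function of order γ ∈ (1,2) and type δ ∈ [0,1]. Then for λ, μ ≥ λ₀, λ^{1−δ(2−γ)} R(μ) − μ^{1−δ(2−γ)} R(λ) = (λ^γ − μ^γ) R(μ) R(λ). -/
open MeasureTheory Filter Topology

/-- Riemann–Liouville fractional integral of order `α` of a vector-valued function. -/
noncomputable def RLv {X : Type*} [NormedAddCommGroup X] [NormedSpace ℝ X] (α : ℝ)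
    (f : ℝ → X) (t : ℝ) : X :=
  (Real.Gamma α)⁻¹ • ∫ s in (0:ℝ)..t, (t - s) ^ (α - 1) • f s

/-- A general fractional cosine operator function of order `γ ∈ (1,2)` and type `δ ∈ [0,1]`:
strong continuity on `(0,∞)`, the limit condition at `0+`, commutativity, and the
functional equation (iv). -/
structure GenFracCosine {X : Type*} [NormedAddCommGroup X] [NormedSpace ℝ X]
    (γ δ : ℝ) (C : ℝ → X →L[ℝ] X) : Prop where
  strongCont : ∀ x : X, ContinuousOn (fun t => C t x) (Set.Ioi 0)
  limit : ∀ x : X, Filter.Tendsto (fun t : ℝ => (t ^ (γ + δ * (2 - γ) - 2))⁻¹ • C t x)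
      (𝓝[>] (0:ℝ)) (𝓝 ((Real.Gamma (γ + δ * (2 - γ) - 1))⁻¹ • x))
  comm : ∀ t s : ℝ, 0 < t → 0 < s → ∀ x : X, C t (C s x) = C s (C t x)
  funEq : ∀ t s : ℝ, 0 < t → 0 < s → ∀ x : X,
    C s (RLv γ (fun τ => C τ x) t) - RLv γ (fun τ => C τ (C t x)) s
      = (s ^ (γ + δ * (2 - γ) - 2) / Real.Gamma (γ + δ * (2 - γ) - 1)) •
          RLv γ (fun τ => C τ x) t
        - (t ^ (γ + δ * (2 - γ) - 2) / Real.Gamma (γ + δ * (2 - γ) - 1)) •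
          RLv γ (fun τ => C τ x) s

/-- `InGen γ δ C x y` means `x ∈ D(A)` and `A x = y`, where `A` is the generator of the
general fractional cosine operator function `C`. -/
def InGen {X : Type*} [NormedAddCommGroup X] [NormedSpace ℝ X]
    (γ δ : ℝ) (C : ℝ → X →L[ℝ] X) (x y : X) : Prop :=
  Filter.Tendsto (fun t : ℝ => Real.Gamma (2 * γ + δ * (2 - γ) - 1) •
      (t ^ (2 * γ + δ * (2 - γ) - 2))⁻¹ •
        (C t x - (t ^ (γ + δ * (2 - γ) - 2) / Real.Gamma (γ + δ * (2 - γ) - 1)) • x))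
    (𝓝[>] (0:ℝ)) (𝓝 y)

/-!
Write `R(λ)x = ∫₀^∞ e^{-λt} C(t)x dt` and `β = γ + δ(2-γ)`. Laplace-transform the functional
equation in `t` and then in `s`: the transform of `J^γ f` is `λ^{-γ} f̂(λ)` (a convolution
identity) and that of `t^{β-2}/Γ(β-1)` is `λ^{1-β}`, so
`λ^{-γ} R(μ)R(λ)x - μ^{-γ} R(λ)R(μ)x = μ^{1-β} λ^{-γ} R(λ)x - λ^{1-β} μ^{-γ} R(μ)x`.
As the `C(t)` commute, so do `R(λ)` and `R(μ)`, and multiplying by `λ^γ μ^γ` gives the identity.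

Moving `R(λ)` through the `s`-integral needs it to be bounded, which holds for any strongly
integrable family of operators by the closed graph theorem. Moving `C(t)` through `J^γ` needs
`τ ↦ (s-τ)^{γ-1} C(τ)x` integrable on `(0,s)`, which follows from `C(τ)x = O(τ^{β-2})` at `0`.
-/

open Set Asymptotics Convolution

section StrongIntegral

variable {α E F : Type*} [MeasurableSpace α] {μ : Measure α}
  [NormedAddCommGroup E] [NormedSpace ℝ E] [NormedAddCommGroup F] [NormedSpace ℝ F]
  (A : α → E →L[ℝ] F) (hA : ∀ x, Integrable (fun a => A a x) μ)

noncomputable def familyToL1 : E →ₗ[ℝ] α →₁[μ] F where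
  toFun x := (hA x).toL1 _
  map_add' x y := by
    simp only [map_add]
    exact Integrable.toL1_add _ _ (hA x) (hA y)
  map_smul' c x := by
    simp only [map_smul]
    exact Integrable.toL1_smul _ (hA x) c

variable [CompleteSpace E] [CompleteSpace F]

/-- Closed graph: `L¹` convergence of `A · uₙ` gives a.e. convergence along a subsequence, while
`A a uₙ → A a x` for every `a`. -/
theorem continuous_familyToL1 : Continuous (familyToL1 A hA) := by
  refine LinearMap.continuous_of_seq_closed_graph _ fun u x g hu hg => ?_
  obtain ⟨φ, hφ, hφg⟩ := (tendstoInMeasure_of_tendsto_Lp hg).exists_seq_tendsto_ae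
  refine Lp.ext ?_
  filter_upwards [hφg, ae_all_iff.2 fun n => (hA (u n)).coeFn_toL1, (hA x).coeFn_toL1]
    with a hga hu_eq hx_eq
  refine tendsto_nhds_unique hga ?_
  simp only [Function.comp_apply, familyToL1, LinearMap.coe_mk, AddHom.coe_mk, hu_eq, hx_eq]
  exact ((A a).continuous.tendsto x).comp (hu.comp hφ.tendsto_atTop)

noncomputable def strongIntegral : E →L[ℝ] F :=
  L1.integralCLM.comp ⟨familyToL1 A hA, continuous_familyToL1 A hA⟩

theorem strongIntegral_apply (x : E) : strongIntegral A hA x = ∫ a, A a x ∂μ := by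
  rw [integral_eq _ (hA x), L1.integral_def]
  rfl

end StrongIntegral

theorem intervalIntegrable_of_isBigO_rpow {E : Type*} [NormedAddCommGroup E] {f : ℝ → E}
    {a s : ℝ} (ha : -1 < a) (hs : 0 ≤ s) (hf : ContinuousOn f (Ioi 0))
    (hO : f =O[𝓝[>] 0] fun t => t ^ a) : IntervalIntegrable f volume 0 s := by
  have hrpow : IntegrableAtFilter (fun t : ℝ => t ^ a) (𝓝[>] 0) :=
    ⟨Ioo 0 1, Ioo_mem_nhdsGT one_pos, (intervalIntegral.integrableOn_Ioo_rpow_iff one_pos).2 ha⟩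
  obtain ⟨U, hU, hfU⟩ :=
    hO.integrableAtFilter (hf.stronglyMeasurableAtFilter_nhdsWithin measurableSet_Ioi 0) hrpow
  obtain ⟨ε, hε : 0 < ε, hεU⟩ := mem_nhdsGT_iff_exists_Ioo_subset.1 hU
  rw [intervalIntegrable_iff_integrableOn_Ioc_of_le hs]
  have hfIcc : IntegrableOn f (Icc (ε / 2) s) :=
    (hf.mono fun t ht => (half_pos hε).trans_le ht.1).integrableOn_Icc
  refine ((hfU.mono_set hεU).union hfIcc).mono_set fun t ht => ?_
  rcases lt_or_ge t ε with h | h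
  · exact Or.inl ⟨ht.1, h⟩
  · exact Or.inr ⟨by linarith, ht.2⟩

section Laplace

variable {E F : Type*} [NormedAddCommGroup E] [NormedSpace ℝ E]
  [NormedAddCommGroup F] [NormedSpace ℝ F]

noncomputable def laplace (l : ℝ) (f : ℝ → E) : E :=
  ∫ t in Ioi 0, Real.exp (-l * t) • f t

def LaplaceIntegrable (l : ℝ) (f : ℝ → E) : Prop :=
  IntegrableOn (fun t => Real.exp (-l * t) • f t) (Ioi 0)

variable {l : ℝ} {f g : ℝ → E}

theorem LaplaceIntegrable.integrable_indicator (hf : LaplaceIntegrable l f) :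
    Integrable (indicator (Ioi 0) fun t => Real.exp (-l * t) • f t) :=
  (integrable_indicator_iff measurableSet_Ioi).2 hf

theorem laplace_congr (h : EqOn f g (Ioi 0)) : laplace l f = laplace l g :=
  setIntegral_congr_fun measurableSet_Ioi fun t ht => by rw [h ht]

theorem laplace_sub (hf : LaplaceIntegrable l f) (hg : LaplaceIntegrable l g) :
    laplace l (fun t => f t - g t) = laplace l f - laplace l g := by
  simp only [laplace, smul_sub]
  exact integral_sub hf hg

theorem laplace_sub_eq_sub_of_eqOn {f₁ f₂ g₁ g₂ : ℝ → E}
    (h : ∀ t > 0, f₁ t - f₂ t = g₁ t - g₂ t)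
    (hf₁ : LaplaceIntegrable l f₁) (hf₂ : LaplaceIntegrable l f₂)
    (hg₁ : LaplaceIntegrable l g₁) (hg₂ : LaplaceIntegrable l g₂) :
    laplace l f₁ - laplace l f₂ = laplace l g₁ - laplace l g₂ := by
  rw [← laplace_sub hf₁ hf₂, ← laplace_sub hg₁ hg₂]
  exact laplace_congr fun t ht => h t ht

theorem laplace_const_smul (c : ℝ) : laplace l (fun t => c • f t) = c • laplace l f := by
  simp only [laplace, smul_comm _ c]
  exact integral_smul c _

theorem LaplaceIntegrable.const_smul (hf : LaplaceIntegrable l f) (c : ℝ) :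
    LaplaceIntegrable l (fun t => c • f t) := by
  unfold LaplaceIntegrable
  simp_rw [smul_comm _ c]
  exact hf.smul c

theorem LaplaceIntegrable.clm (hf : LaplaceIntegrable l f) (T : E →L[ℝ] F) :
    LaplaceIntegrable l (fun t => T (f t)) := by
  unfold LaplaceIntegrable
  simp_rw [← map_smul]
  exact T.integrable_comp hf

theorem laplace_clm [CompleteSpace E] [CompleteSpace F] (hf : LaplaceIntegrable l f)
    (T : E →L[ℝ] F) : laplace l (fun t => T (f t)) = T (laplace l f) := by
  simp only [laplace, ← map_smul]
  exact T.integral_comp_comm hf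

theorem LaplaceIntegrable.smul_const {φ : ℝ → ℝ} (hφ : LaplaceIntegrable l φ) (v : E) :
    LaplaceIntegrable l (fun t => φ t • v) := by
  unfold LaplaceIntegrable
  simp_rw [← smul_assoc]
  exact Integrable.smul_const hφ v

theorem laplace_smul_const [CompleteSpace E] (φ : ℝ → ℝ) (v : E) :
    laplace l (fun t => φ t • v) = laplace l φ • v := by
  simp only [laplace, ← smul_assoc]
  exact integral_smul_const _ v

theorem laplaceIntegrable_rpow {a : ℝ} (ha : -1 < a) (hl : 0 < l) :
    LaplaceIntegrable l (fun t => t ^ a) := by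
  refine IntegrableOn.congr_fun (integrableOn_rpow_mul_exp_neg_mul_rpow ha one_pos hl)
    (fun t _ => ?_) measurableSet_Ioi
  simp only [Real.rpow_one, smul_eq_mul, mul_comm]

theorem laplace_rpow {a : ℝ} (ha : 0 < a) (hl : 0 < l) :
    laplace l (fun t => t ^ (a - 1)) = Real.Gamma a * l ^ (-a) := by
  have := Real.integral_rpow_mul_exp_neg_mul_Ioi ha hl
  rw [one_div, Real.inv_rpow hl.le, ← Real.rpow_neg hl.le, mul_comm] at this
  simp only [laplace, smul_eq_mul, ← this, mul_comm (Real.exp _), neg_mul]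

theorem laplace_rpow_div_Gamma_smul [CompleteSpace E] {a : ℝ} (ha : 0 < a) (hl : 0 < l)
    (v : E) : laplace l (fun t => (t ^ (a - 1) / Real.Gamma a) • v) = l ^ (-a) • v := by
  simp_rw [div_eq_mul_inv, mul_smul]
  rw [laplace_smul_const, laplace_rpow ha hl, mul_comm, mul_smul,
    smul_inv_smul₀ (Real.Gamma_pos_of_pos ha).ne']

theorem laplaceIntegrable_rpow_div_smul {a : ℝ} (ha : -1 < a) (hl : 0 < l) (c : ℝ) (v : E) :
    LaplaceIntegrable l (fun t => (t ^ a / c) • v) := by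
  simp_rw [div_eq_mul_inv, mul_smul]
  exact (laplaceIntegrable_rpow ha hl).smul_const _

end Laplace

section RiemannLiouville

variable {E : Type*} [NormedAddCommGroup E] [NormedSpace ℝ E] {α l : ℝ} {g : ℝ → E}

theorem RLv_congr {f : ℝ → E} (h : EqOn f g (Ioi 0)) {t : ℝ} (ht : 0 ≤ t) :
    RLv α f t = RLv α g t := by
  unfold RLv
  congr 1
  refine intervalIntegral.integral_congr_ae (Eventually.of_forall fun τ hτ => ?_)
  rw [uIoc_of_le ht] at hτ
  rw [h hτ.1]

theorem RLv_clm [CompleteSpace E] {F : Type*} [NormedAddCommGroup F] [NormedSpace ℝ F]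
    [CompleteSpace F] (T : E →L[ℝ] F) {t : ℝ}
    (hg : IntervalIntegrable (fun τ => (t - τ) ^ (α - 1) • g τ) volume 0 t) :
    RLv α (fun τ => T (g τ)) t = T (RLv α g t) := by
  simp only [RLv, map_smul, ← T.intervalIntegral_comp_comm hg]

/-- `e^{-ls} ∫₀ˢ (s-u)^{α-1} g(u) du` is a convolution on `ℝ`, so its integral over `(0,∞)`
factors into two Laplace transforms. -/
theorem convolution_indicator_exp_smul (g : ℝ → E) :
    (indicator (Ioi 0) (fun u => Real.exp (-l * u) • u ^ (α - 1)) ⋆[ContinuousLinearMap.lsmul ℝ ℝ]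
      indicator (Ioi 0) (fun u => Real.exp (-l * u) • g u))
    = indicator (Ioi 0)
        (fun s => Real.exp (-l * s) • ∫ u in (0:ℝ)..s, (s - u) ^ (α - 1) • g u) := by
  ext s
  rcases le_or_gt s 0 with hs | hs
  · rw [indicator_of_notMem (show s ∉ Ioi 0 from not_lt.2 hs), convolution_def]
    refine integral_eq_zero_of_ae (Eventually.of_forall fun τ => ?_)
    dsimp only [Pi.zero_apply]
    rcases le_or_gt τ 0 with hτ | hτ
    · rw [indicator_of_notMem (show τ ∉ Ioi 0 from not_lt.2 hτ)]
      simp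
    · rw [indicator_of_notMem (show s - τ ∉ Ioi 0 by simp only [mem_Ioi, not_lt]; linarith)]
      simp
  rw [indicator_of_mem (show s ∈ Ioi 0 from hs), convolution_lsmul_swap,
    intervalIntegral.integral_of_le hs.le,
    integral_Ioc_eq_integral_Ioo, ← integral_smul, ← integral_indicator measurableSet_Ioo]
  congr 1 with u
  by_cases hu : u ∈ Ioo 0 s
  · rw [indicator_of_mem hu, indicator_of_mem (show s - u ∈ Ioi 0 from sub_pos.2 hu.2),
      indicator_of_mem (show u ∈ Ioi 0 from hu.1), smul_smul, smul_smul, smul_eq_mul,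
      mul_right_comm, ← Real.exp_add]
    ring_nf
  · rw [indicator_of_notMem hu]
    rcases le_or_gt u 0 with hu0 | hu0
    · rw [indicator_of_notMem (show u ∉ Ioi 0 from not_lt.2 hu0)]
      simp
    · have hsu : s ≤ u := not_lt.1 fun h => hu ⟨hu0, h⟩
      rw [indicator_of_notMem (show s - u ∉ Ioi 0 by simp only [mem_Ioi, not_lt]; linarith)]
      simp

theorem laplaceIntegrable_RLv (hα : 0 < α) (hl : 0 < l) (hg : LaplaceIntegrable l g) :
    LaplaceIntegrable l (RLv α g) := by
  have hk := laplaceIntegrable_rpow (by linarith : -1 < α - 1) hl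
  have hconv := hk.integrable_indicator.integrable_convolution
    (ContinuousLinearMap.lsmul ℝ ℝ) hg.integrable_indicator
  rw [convolution_indicator_exp_smul, integrable_indicator_iff measurableSet_Ioi] at hconv
  unfold LaplaceIntegrable RLv
  simp_rw [smul_comm _ (Real.Gamma α)⁻¹]
  exact hconv.smul _

theorem laplace_RLv [CompleteSpace E] (hα : 0 < α) (hl : 0 < l) (hg : LaplaceIntegrable l g) :
    laplace l (RLv α g) = l ^ (-α) • laplace l g := by
  have hk := laplaceIntegrable_rpow (by linarith : -1 < α - 1) hl
  have hconv := integral_convolution (ContinuousLinearMap.lsmul ℝ ℝ)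
    hk.integrable_indicator hg.integrable_indicator
  rw [convolution_indicator_exp_smul, integral_indicator measurableSet_Ioi,
    integral_indicator measurableSet_Ioi, integral_indicator measurableSet_Ioi] at hconv
  change _ = laplace l (fun t : ℝ => t ^ (α - 1)) • laplace l g at hconv
  rw [laplace_rpow hα hl, mul_smul] at hconv
  have hRLv : laplace l (RLv α g) = (Real.Gamma α)⁻¹ •
      ∫ s in Ioi 0, Real.exp (-l * s) • ∫ u in (0:ℝ)..s, (s - u) ^ (α - 1) • g u := by
    unfold laplace RLv
    simp_rw [smul_comm _ (Real.Gamma α)⁻¹]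
    exact integral_smul _ _
  rw [hRLv, hconv, inv_smul_smul₀ (Real.Gamma_pos_of_pos hα).ne']

end RiemannLiouville

section LaplaceOperator

variable {E F : Type*} [NormedAddCommGroup E] [NormedSpace ℝ E] [CompleteSpace E]
  [NormedAddCommGroup F] [NormedSpace ℝ F] [CompleteSpace F]

noncomputable def laplaceCLM (C : ℝ → E →L[ℝ] F) (l : ℝ)
    (hC : ∀ x, LaplaceIntegrable l (fun t => C t x)) : E →L[ℝ] F :=
  strongIntegral (μ := volume.restrict (Ioi 0)) (fun t => Real.exp (-l * t) • C t) hC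

theorem laplaceCLM_apply (C : ℝ → E →L[ℝ] F) (l : ℝ)
    (hC : ∀ x, LaplaceIntegrable l (fun t => C t x)) (x : E) :
    laplaceCLM C l hC x = laplace l (fun t => C t x) :=
  strongIntegral_apply _ _ x

theorem laplaceCLM_comm (C : ℝ → E →L[ℝ] E) (l : ℝ)
    (hC : ∀ x, LaplaceIntegrable l (fun t => C t x)) (T : E →L[ℝ] E)
    (hT : ∀ t > 0, ∀ y, T (C t y) = C t (T y)) (x : E) :
    T (laplaceCLM C l hC x) = laplaceCLM C l hC (T x) := by
  rw [laplaceCLM_apply, laplaceCLM_apply, ← laplace_clm (hC x)]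
  exact laplace_congr fun t ht => hT t ht x

end LaplaceOperator

namespace GenFracCosine

variable {X : Type*} [NormedAddCommGroup X] [NormedSpace ℝ X] {γ δ : ℝ} {C : ℝ → X →L[ℝ] X}

theorem isBigO_rpow (hC : GenFracCosine γ δ C) (x : X) :
    (fun t => C t x) =O[𝓝[>] 0] fun t => t ^ (γ + δ * (2 - γ) - 2) := by
  have hbdd := ((isBigO_refl (fun t : ℝ => t ^ (γ + δ * (2 - γ) - 2)) _).smul
    ((hC.limit x).isBigO_one ℝ))
  refine hbdd.congr' ?_ (Eventually.of_forall fun t => smul_eq_mul _ _ |>.trans (mul_one _))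
  filter_upwards [self_mem_nhdsWithin] with t (ht : 0 < t)
  rw [smul_inv_smul₀ (Real.rpow_pos_of_pos ht _).ne']

theorem intervalIntegrable_RLv_integrand (hC : GenFracCosine γ δ C) (hγ : 1 ≤ γ)
    (hβ : 1 < γ + δ * (2 - γ)) (x : X) {s : ℝ} (hs : 0 ≤ s) :
    IntervalIntegrable (fun τ => (s - τ) ^ (γ - 1) • C τ x) volume 0 s := by
  refine (intervalIntegrable_of_isBigO_rpow (by linarith) hs (hC.strongCont x)
    (hC.isBigO_rpow x)).continuousOn_smul ?_
  exact ((continuous_const.sub continuous_id).rpow_const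
    fun _ => Or.inr (sub_nonneg.2 hγ)).continuousOn

theorem RLv_apply_comm [CompleteSpace X] (hC : GenFracCosine γ δ C) (hγ : 1 ≤ γ)
    (hβ : 1 < γ + δ * (2 - γ)) (x : X) {t s : ℝ} (ht : 0 < t) (hs : 0 ≤ s) :
    RLv γ (fun τ => C τ (C t x)) s = C t (RLv γ (fun τ => C τ x) s) := by
  rw [← RLv_clm (C t) (hC.intervalIntegrable_RLv_integrand hγ hβ x hs)]
  exact RLv_congr (fun τ hτ => hC.comm τ t hτ ht x) hs

/-- The functional equation after a Laplace transform in `t`, with `s > 0` fixed. -/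
theorem laplace_funEq [CompleteSpace X] (hC : GenFracCosine γ δ C) (hγ : 1 ≤ γ)
    (hβ : 1 < γ + δ * (2 - γ)) {l : ℝ} (hl : 0 < l)
    (hCl : ∀ x, LaplaceIntegrable l (fun t => C t x)) (x : X) {s : ℝ} (hs : 0 < s) :
    C s (l ^ (-γ) • laplaceCLM C l hCl x) - laplaceCLM C l hCl (RLv γ (fun τ => C τ x) s)
      = (s ^ (γ + δ * (2 - γ) - 2) / Real.Gamma (γ + δ * (2 - γ) - 1)) •
          (l ^ (-γ) • laplaceCLM C l hCl x)
        - l ^ (-(γ + δ * (2 - γ) - 1)) • RLv γ (fun τ => C τ x) s := by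
  have hRL := laplaceIntegrable_RLv (α := γ) (by linarith) hl (hCl x)
  have key := laplace_sub_eq_sub_of_eqOn (l := l)
    (fun t ht => by rw [← hC.RLv_apply_comm hγ hβ x ht hs.le]; exact hC.funEq t s ht hs x)
    (hRL.clm (C s)) (hCl _) (hRL.const_smul _)
    (laplaceIntegrable_rpow_div_smul (by linarith) hl _ _)
  rw [laplace_clm hRL, laplace_RLv (by linarith) hl (hCl x), laplace_const_smul,
    laplace_RLv (by linarith) hl (hCl x),
    show γ + δ * (2 - γ) - 2 = γ + δ * (2 - γ) - 1 - 1 by ring,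
    laplace_rpow_div_Gamma_smul (by linarith) hl, ← laplaceCLM_apply C l hCl,
    ← laplaceCLM_apply C l hCl] at key
  rw [show γ + δ * (2 - γ) - 2 = γ + δ * (2 - γ) - 1 - 1 by ring]
  exact key

theorem laplaceCLM_comm_laplaceCLM [CompleteSpace X] (hC : GenFracCosine γ δ C) {l μ : ℝ}
    (hCl : ∀ x, LaplaceIntegrable l (fun t => C t x))
    (hCμ : ∀ x, LaplaceIntegrable μ (fun t => C t x)) (x : X) :
    laplaceCLM C μ hCμ (laplaceCLM C l hCl x) = laplaceCLM C l hCl (laplaceCLM C μ hCμ x) :=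
  laplaceCLM_comm C l hCl _ (fun t ht y =>
    (laplaceCLM_comm C μ hCμ (C t) (fun s hs z => hC.comm t s ht hs z) y).symm) x

/-- The functional equation after Laplace transforms in both variables. -/
theorem laplace_laplace_funEq [CompleteSpace X] (hC : GenFracCosine γ δ C) (hγ : 1 ≤ γ)
    (hβ : 1 < γ + δ * (2 - γ)) {l μ : ℝ} (hl : 0 < l) (hμ : 0 < μ)
    (hCl : ∀ x, LaplaceIntegrable l (fun t => C t x))
    (hCμ : ∀ x, LaplaceIntegrable μ (fun t => C t x)) (x : X) :
    l ^ (-γ) • laplaceCLM C μ hCμ (laplaceCLM C l hCl x)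
        - μ ^ (-γ) • laplaceCLM C μ hCμ (laplaceCLM C l hCl x)
      = μ ^ (-(γ + δ * (2 - γ) - 1)) • l ^ (-γ) • laplaceCLM C l hCl x
        - l ^ (-(γ + δ * (2 - γ) - 1)) • μ ^ (-γ) • laplaceCLM C μ hCμ x := by
  have hRL := laplaceIntegrable_RLv (α := γ) (by linarith) hμ (hCμ x)
  have key := laplace_sub_eq_sub_of_eqOn (l := μ)
    (fun s hs => hC.laplace_funEq hγ hβ hl hCl x hs) (hCμ _) (hRL.clm _)
    (laplaceIntegrable_rpow_div_smul (by linarith) hμ _ _) (hRL.const_smul _)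
  rw [show γ + δ * (2 - γ) - 2 = γ + δ * (2 - γ) - 1 - 1 by ring,
    laplace_rpow_div_Gamma_smul (by linarith) hμ, laplace_const_smul, laplace_clm hRL,
    laplace_RLv (by linarith) hμ (hCμ x), ← laplaceCLM_apply C μ hCμ,
    ← laplaceCLM_apply C μ hCμ, map_smul, map_smul,
    hC.laplaceCLM_comm_laplaceCLM hCμ hCl] at key
  exact key

theorem resolvent_identity [CompleteSpace X] (hC : GenFracCosine γ δ C) (hγ : 1 ≤ γ)
    (hβ : 1 < γ + δ * (2 - γ)) {l μ : ℝ} (hl : 0 < l) (hμ : 0 < μ)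
    (hCl : ∀ x, LaplaceIntegrable l (fun t => C t x))
    (hCμ : ∀ x, LaplaceIntegrable μ (fun t => C t x)) (x : X) :
    l ^ (1 - δ * (2 - γ)) • laplace μ (fun t => C t x)
        - μ ^ (1 - δ * (2 - γ)) • laplace l (fun t => C t x)
      = (l ^ γ - μ ^ γ) • laplace μ (fun s => C s (laplace l fun t => C t x)) := by
  have key := hC.laplace_laplace_funEq hγ hβ hl hμ hCl hCμ x
  rw [← laplaceCLM_apply C l hCl x, ← laplaceCLM_apply C μ hCμ x, ← laplaceCLM_apply C μ hCμ,
    show 1 - δ * (2 - γ) = γ + -(γ + δ * (2 - γ) - 1) by ring, Real.rpow_add hl,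
    Real.rpow_add hμ]
  have hl' : l ^ γ * l ^ (-γ) = 1 := by rw [← Real.rpow_add hl, add_neg_cancel, Real.rpow_zero]
  have hμ' : μ ^ γ * μ ^ (-γ) = 1 := by rw [← Real.rpow_add hμ, add_neg_cancel, Real.rpow_zero]
  set Rl := laplaceCLM C l hCl
  set Rμ := laplaceCLM C μ hCμ
  linear_combination (norm := module) (l ^ γ * μ ^ γ) • key
    + hl' • (μ ^ γ • (μ ^ (-(γ + δ * (2 - γ) - 1)) • Rl x - Rμ (Rl x)))
    + hμ' • (l ^ γ • (Rμ (Rl x) - l ^ (-(γ + δ * (2 - γ) - 1)) • Rμ x))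

end GenFracCosine

theorem stmt14_general {X : Type*} [NormedAddCommGroup X] [NormedSpace ℝ X] [CompleteSpace X]
    (γ δ : ℝ) (hγ1 : 1 < γ) (hγ2 : γ < 2) (hδ0 : 0 ≤ δ)
    (C : ℝ → X →L[ℝ] X) (hC : GenFracCosine γ δ C)
    (lam0 : ℝ) (hlam0 : 0 < lam0)
    (hint : ∀ l : ℝ, lam0 ≤ l →
      ∀ x : X, IntegrableOn (fun t : ℝ => Real.exp (-l * t) • C t x) (Set.Ioi 0)) :
    ∀ l μ : ℝ, lam0 ≤ l → lam0 ≤ μ → ∀ x : X,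
      l ^ (1 - δ * (2 - γ)) • (∫ t in Set.Ioi (0:ℝ), Real.exp (-μ * t) • C t x)
        - μ ^ (1 - δ * (2 - γ)) • (∫ t in Set.Ioi (0:ℝ), Real.exp (-l * t) • C t x)
      = (l ^ γ - μ ^ γ) •
          ∫ s in Set.Ioi (0:ℝ), Real.exp (-μ * s) •
            C s (∫ t in Set.Ioi (0:ℝ), Real.exp (-l * t) • C t x) := by
  intro l μ hl hμ x
  have hβ : 1 < γ + δ * (2 - γ) := by nlinarith
  exact hC.resolvent_identity hγ1.le hβ (hlam0.trans_le hl) (hlam0.trans_le hμ)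
    (hint l hl) (hint μ hμ) x

theorem stmt14 {X : Type*} [NormedAddCommGroup X] [NormedSpace ℝ X] [CompleteSpace X]
    (γ δ : ℝ) (hγ1 : 1 < γ) (hγ2 : γ < 2) (hδ0 : 0 ≤ δ) (hδ1 : δ ≤ 1)
    (C : ℝ → X →L[ℝ] X) (hC : GenFracCosine γ δ C)
    (lam0 : ℝ) (hlam0 : 0 < lam0)
    (hint : ∀ l : ℝ, lam0 ≤ l →
      ∀ x : X, IntegrableOn (fun t : ℝ => Real.exp (-l * t) • C t x) (Set.Ioi 0)) :
    ∀ l μ : ℝ, lam0 ≤ l → lam0 ≤ μ → ∀ x : X,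
      l ^ (1 - δ * (2 - γ)) • (∫ t in Set.Ioi (0:ℝ), Real.exp (-μ * t) • C t x)
        - μ ^ (1 - δ * (2 - γ)) • (∫ t in Set.Ioi (0:ℝ), Real.exp (-l * t) • C t x)
      = (l ^ γ - μ ^ γ) •
          ∫ s in Set.Ioi (0:ℝ), Real.exp (-μ * s) •
            C s (∫ t in Set.Ioi (0:ℝ), Real.exp (-l * t) • C t x) :=
  stmt14_general γ δ hγ1 hγ2 hδ0 C hC lam0 hlam0 hint
end

section
/- Let γ ∈ (1,2), δ ∈ [0,1], T > 0, M, k > 0. Then the sequence a_n = (4kM)^n T^{nγ} Γ(γ)^n Γ(γ+δ(2−γ)−1) / Γ((n+1)γ + δ(2−γ) − 1) converges to 0 as n → ∞; in particular there exists n₀ with a_{n₀} < 1. -/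
/-!
Writing `c = γ + δ(2 - γ) - 1 ≥ 0` and `B = 4kM T^γ Γ(γ)`, the sequence is `Γ(c) Bⁿ / Γ(nγ + c)`.
Since `γ ≥ 1` and `Γ` is increasing on `[2, ∞)`, the denominator dominates a factorial, which beats
any geometric sequence.
-/

open Filter Topology
open scoped Nat

namespace Real

lemma factorial_le_Gamma_of_natCast_succ_le {n : ℕ} {x : ℝ} (hn : 1 ≤ n) (hx : (n : ℝ) + 1 ≤ x) :
    (n ! : ℝ) ≤ Gamma x := by
  have h2 : (2 : ℝ) ≤ n + 1 := by
    have : (1 : ℝ) ≤ n := by exact_mod_cast hn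
    linarith
  rw [← Gamma_nat_eq_factorial]
  exact Gamma_strictMonoOn_Ici.monotoneOn h2 (h2.trans hx) hx

lemma tendsto_pow_div_Gamma_mul_add_atTop (B : ℝ) {γ c : ℝ} (hγ : 1 ≤ γ) (hc : 0 ≤ c) :
    Tendsto (fun n : ℕ => B ^ n / Gamma (n * γ + c)) atTop (𝓝 0) := by
  rw [← tendsto_add_atTop_iff_nat 1]
  have hfact : Tendsto (fun n : ℕ => |B| * (|B| ^ n / n !)) atTop (𝓝 0) := by
    simpa using (FloorSemiring.tendsto_pow_div_factorial_atTop |B|).const_mul |B|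
  refine squeeze_zero_norm' ?_ hfact
  filter_upwards [eventually_ge_atTop 1] with n hn
  have hx : (n : ℝ) + 1 ≤ ((n + 1 : ℕ) : ℝ) * γ + c := by
    push_cast
    nlinarith
  have hle := factorial_le_Gamma_of_natCast_succ_le hn hx
  have hpos : (0 : ℝ) < n ! := by exact_mod_cast n.factorial_pos
  rw [norm_div, norm_pow, Real.norm_eq_abs, Real.norm_eq_abs, abs_of_pos (hpos.trans_le hle),
    pow_succ, mul_comm _ |B|, mul_div_assoc]
  gcongr

end Real

theorem stmt18_general (γ δ T M k : ℝ) (hγ1 : 1 < γ) (hγ2 : γ < 2) (hδ0 : 0 ≤ δ)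
    (hT : 0 < T) :
    Filter.Tendsto
      (fun n : ℕ => (4 * k * M) ^ n * T ^ (n * γ : ℝ) * Real.Gamma γ ^ n *
        Real.Gamma (γ + δ * (2 - γ) - 1) / Real.Gamma ((n + 1) * γ + δ * (2 - γ) - 1))
      Filter.atTop (𝓝 0) ∧
    ∃ n₀ : ℕ, (4 * k * M) ^ n₀ * T ^ (n₀ * γ : ℝ) * Real.Gamma γ ^ n₀ *
        Real.Gamma (γ + δ * (2 - γ) - 1) / Real.Gamma ((n₀ + 1) * γ + δ * (2 - γ) - 1) < 1 := by
  set c := γ + δ * (2 - γ) - 1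
  have hc : 0 ≤ c := by nlinarith
  have hseq : ∀ n : ℕ, (4 * k * M) ^ n * T ^ (n * γ : ℝ) * Real.Gamma γ ^ n * Real.Gamma c /
      Real.Gamma ((n + 1) * γ + δ * (2 - γ) - 1) =
      Real.Gamma c * ((4 * k * M * T ^ γ * Real.Gamma γ) ^ n / Real.Gamma (n * γ + c)) := by
    intro n
    have harg : ((n : ℝ) + 1) * γ + δ * (2 - γ) - 1 = n * γ + c := by ring
    rw [harg, mul_comm (n : ℝ) γ, Real.rpow_mul hT.le, Real.rpow_natCast]
    ring
  have hlim : Tendsto (fun n : ℕ => (4 * k * M) ^ n * T ^ (n * γ : ℝ) * Real.Gamma γ ^ n *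
      Real.Gamma c / Real.Gamma ((n + 1) * γ + δ * (2 - γ) - 1)) atTop (𝓝 0) := by
    simp_rw [hseq]
    simpa using ((Real.tendsto_pow_div_Gamma_mul_add_atTop _ hγ1.le hc).const_mul (Real.Gamma c))
  exact ⟨hlim, (hlim.eventually_lt_const one_pos).exists⟩

theorem stmt18 (γ δ T M k : ℝ) (hγ1 : 1 < γ) (hγ2 : γ < 2) (hδ0 : 0 ≤ δ) (hδ1 : δ ≤ 1)
    (hT : 0 < T) (hM : 0 < M) (hk : 0 < k) :
    Filter.Tendsto
      (fun n : ℕ => (4 * k * M) ^ n * T ^ (n * γ : ℝ) * Real.Gamma γ ^ n *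
        Real.Gamma (γ + δ * (2 - γ) - 1) / Real.Gamma ((n + 1) * γ + δ * (2 - γ) - 1))
      Filter.atTop (𝓝 0) ∧
    ∃ n₀ : ℕ, (4 * k * M) ^ n₀ * T ^ (n₀ * γ : ℝ) * Real.Gamma γ ^ n₀ *
        Real.Gamma (γ + δ * (2 - γ) - 1) / Real.Gamma ((n₀ + 1) * γ + δ * (2 - γ) - 1) < 1 :=
  stmt18_general γ δ T M k hγ1 hγ2 hδ0 hT
end
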